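/- arXiv:2007.04946 — 6 statements merged into one kernel-verified Lean document; each statement's English description precedes it below -/
import Mathlib

section
/- Let X be a real Banach space and let x ∈ S_X. Then x is a delta-point if and only if for every slice S of B_X with x ∈ S and every ε > 0 there exists y ∈ S such that ‖x − y‖ ≥ 2 − ε. -/
noncomputable section

/-- `Δ_ε(x)`: the set of elements of the closed unit ball that are at distance
at least `2 - ε` from `x`. -/
def deltaSet {X : Type*} [NormedAddCommGroup X] [NormedSpace ℝ X] (x : X) (ε : ℝ) : Set X :=
  {y | ‖y‖ ≤ 1 ∧ 2 - ε ≤ ‖x - y‖}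

/-- `x` is a delta-point if for every `ε > 0` the point `x` belongs to the closed
convex hull of `Δ_ε(x)`. -/
def IsDeltaPoint {X : Type*} [NormedAddCommGroup X] [NormedSpace ℝ X] (x : X) : Prop :=
  ∀ ε : ℝ, 0 < ε → x ∈ closure (convexHull ℝ (deltaSet x ε))

/-- A point `x` of the unit sphere of a Banach space is a delta-point if and only if
every slice `S(g, δ)` of the unit ball containing `x` contains, for every `ε > 0`,
an element `y` with `‖x - y‖ ≥ 2 - ε`. -/
theorem deltaPoint_iff_slices {X : Type*} [NormedAddCommGroup X] [NormedSpace ℝ X]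
    [CompleteSpace X] (x : X) (hx : ‖x‖ = 1) :
    IsDeltaPoint x ↔
      ∀ (g : X →L[ℝ] ℝ) (δ : ℝ), 0 < δ → ‖g‖ - δ < g x → ∀ ε : ℝ, 0 < ε →
        ∃ y : X, (‖y‖ ≤ 1 ∧ ‖g‖ - δ < g y) ∧ 2 - ε ≤ ‖x - y‖ := by
  constructor
  · intro hΔ g δ hδ hgx ε hε
    by_contra h
    push_neg at h
    -- every point of Δ_ε(x) satisfies g y ≤ ‖g‖ - δ
    have hsub : deltaSet x ε ⊆ {z : X | g z ≤ ‖g‖ - δ} := by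
      intro y hy
      by_contra hy'
      simp only [Set.mem_setOf_eq, not_le] at hy'
      exact absurd hy.2 (not_le.mpr (h y ⟨hy.1, hy'⟩))
    have hconv : Convex ℝ {z : X | g z ≤ ‖g‖ - δ} :=
      convex_halfSpace_le (g : X →ₗ[ℝ] ℝ).isLinear _
    have hclosed : IsClosed {z : X | g z ≤ ‖g‖ - δ} :=
      isClosed_le g.continuous continuous_const
    have hx' := hΔ ε hε
    have : x ∈ {z : X | g z ≤ ‖g‖ - δ} :=
      closure_minimal (convexHull_min hsub hconv) hclosed hx'
    exact absurd hgx (not_lt.mpr this)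
  · intro h ε hε
    by_contra hx'
    obtain ⟨f, u, hfu, hux⟩ :=
      geometric_hahn_banach_closed_point
        ((convex_convexHull ℝ (deltaSet x ε)).closure) isClosed_closure hx'
    -- f x ≤ ‖f‖
    have hfx : f x ≤ ‖f‖ := by
      calc f x ≤ ‖f x‖ := le_abs_self _
        _ ≤ ‖f‖ * ‖x‖ := f.le_opNorm x
        _ = ‖f‖ := by rw [hx, mul_one]
    have hδ : 0 < ‖f‖ - u := by linarith
    have hgx : ‖f‖ - (‖f‖ - u) < f x := by linarith
    obtain ⟨y, ⟨hy1, hy2⟩, hy3⟩ := h f (‖f‖ - u) hδ hgx ε hε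
    have : y ∈ closure (convexHull ℝ (deltaSet x ε)) :=
      subset_closure (subset_convexHull ℝ _ ⟨hy1, hy3⟩)
    have := hfu y this
    linarith
end
end

section
/- Let X be a real Banach space with a normalized 1-unconditional basis (e_i)_{i∈ℕ} with biorthogonal functionals (e*_i)_{i∈ℕ}. Then M(x) is nonempty for every x ∈ X. -/
noncomputable section

variable {X : Type*} [NormedAddCommGroup X] [NormedSpace ℝ X]

/-- `(e, f)` is a normalized 1-unconditional basis of `X` with biorthogonal functionals `f`. -/
structure IsUncondBasis (e : ℕ → X) (f : ℕ → X →L[ℝ] ℝ) : Prop where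
  norm_e : ∀ i, ‖e i‖ = 1
  biorth : ∀ i j, f i (e j) = if i = j then (1 : ℝ) else 0
  expand : ∀ x : X, HasSum (fun i => f i x • e i) x
  signs : ∀ (x : X) (θ : ℕ → ℝ), (∀ i, θ i = 1 ∨ θ i = -1) →
    ∃ y : X, HasSum (fun i => θ i • f i x • e i) y ∧ ‖y‖ = ‖x‖

/-- The projection `P_A x = ∑_{i ∈ A} f i x • e i`. -/
def basisProj (e : ℕ → X) (f : ℕ → X →L[ℝ] ℝ) (A : Set ℕ) (x : X) : X :=
  ∑' i : A, f i x • e i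

/-- The family `M(x)` of minimal norm-giving subsets of the support of `x`. -/
def Mset (e : ℕ → X) (f : ℕ → X →L[ℝ] ℝ) (x : X) : Set (Set ℕ) :=
  {A | ‖basisProj e f A x‖ = ‖x‖ ∧ ∀ i ∈ A, ‖basisProj e f A x - f i x • e i‖ < ‖x‖}

open Set Filter Topology

namespace MsetAux

open scoped Classical

variable (e : ℕ → X) (f : ℕ → X →L[ℝ] ℝ)

/-- The indicator-sum version of the projection. -/
def S (x : X) (C : Set ℕ) : X := ∑' j, C.indicator (fun j => f j x • e j) j

variable {e f}

lemma exists_hasSum (hb : IsUncondBasis e f) (z : X) (C : Set ℕ) :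
    ∃ w, HasSum (C.indicator (fun j => f j z • e j)) w ∧ ‖w‖ ≤ ‖z‖ := by
  set θ : ℕ → ℝ := fun j => if j ∈ C then 1 else -1 with hθ
  obtain ⟨y, hy, hny⟩ := hb.signs z θ (fun i => by by_cases h : i ∈ C <;> simp [θ, h])
  refine ⟨(2⁻¹ : ℝ) • (z + y), ?_, ?_⟩
  · have h := ((hb.expand z).add hy).const_smul (2⁻¹ : ℝ)
    convert h using 1
    funext j
    by_cases h : j ∈ C
    · simp only [indicator_of_mem h, θ, if_pos h, one_smul, smul_add]
      rw [← smul_add, ← two_smul ℝ (f j z • e j), smul_smul]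
      norm_num
    · simp [indicator_of_notMem h, θ, if_neg h]
  · rw [norm_smul]
    have := norm_add_le z y
    rw [hny] at this
    simp only [norm_inv, Real.norm_ofNat]
    linarith

lemma hasSum_S (hb : IsUncondBasis e f) (z : X) (C : Set ℕ) :
    HasSum (C.indicator (fun j => f j z • e j)) (S e f z C) := by
  obtain ⟨w, hw, -⟩ := exists_hasSum hb z C
  rwa [S, hw.tsum_eq]

lemma norm_S_le (hb : IsUncondBasis e f) (z : X) (C : Set ℕ) : ‖S e f z C‖ ≤ ‖z‖ := by
  obtain ⟨w, hw, h⟩ := exists_hasSum hb z C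
  rwa [S, hw.tsum_eq]

lemma f_apply_S (hb : IsUncondBasis e f) (z : X) (D : Set ℕ) (i : ℕ) :
    f i (S e f z D) = D.indicator (fun j => f j z) i := by
  have h := (hasSum_S hb z D).mapL (f i)
  have heq : (fun j => f i (D.indicator (fun j => f j z • e j) j))
      = fun j => if j = i then D.indicator (fun j => f j z) i else 0 := by
    funext j
    by_cases hj : j ∈ D
    · simp only [indicator_of_mem hj, map_smul, hb.biorth i j, smul_eq_mul]
      by_cases hij : j = i
      · subst hij; simp [indicator_of_mem hj]
      · simp [Ne.symm hij, hij]
    · simp only [indicator_of_notMem hj, map_zero]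
      by_cases hij : j = i
      · subst hij; simp [indicator_of_notMem hj]
      · simp [hij]
  rw [heq] at h
  exact h.unique (hasSum_ite_eq i _)

lemma S_mono (hb : IsUncondBasis e f) (x : X) {C D : Set ℕ} (hCD : C ⊆ D) :
    ‖S e f x C‖ ≤ ‖S e f x D‖ := by
  have key : C.indicator (fun j => f j (S e f x D) • e j)
      = C.indicator (fun j => f j x • e j) := by
    apply indicator_congr
    intro j hj
    show f j (S e f x D) • e j = f j x • e j
    rw [f_apply_S hb x D j, indicator_of_mem (hCD hj)]
  have h := norm_S_le hb (S e f x D) C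
  rwa [S, key, ← S] at h

lemma S_union (hb : IsUncondBasis e f) (x : X) {C D : Set ℕ} (h : Disjoint C D) :
    S e f x (C ∪ D) = S e f x C + S e f x D := by
  have h1 := (hasSum_S hb x C).add (hasSum_S hb x D)
  have h2 : (fun j => C.indicator (fun j => f j x • e j) j
      + D.indicator (fun j => f j x • e j) j)
      = (C ∪ D).indicator (fun j => f j x • e j) := by
    rw [indicator_union_of_disjoint h]
  rw [h2] at h1
  exact (hasSum_S hb x (C ∪ D)).unique h1

lemma S_univ (hb : IsUncondBasis e f) (x : X) : S e f x univ = x := by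
  have := hasSum_S hb x univ
  rw [indicator_univ] at this
  exact this.unique (hb.expand x)

lemma S_singleton (hb : IsUncondBasis e f) (x : X) (i : ℕ) :
    S e f x {i} = f i x • e i := by
  rw [S, tsum_eq_single i]
  · simp
  · intro j hj
    exact indicator_of_notMem (by simpa using hj) _

lemma S_Iio (hb : IsUncondBasis e f) (x : X) (C : Set ℕ) (n : ℕ) :
    S e f x (C ∩ Iio n) = ∑ j ∈ Finset.range n, C.indicator (fun j => f j x • e j) j := by
  rw [S, tsum_eq_sum (s := Finset.range n)]
  · apply Finset.sum_congr rfl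
    intro j hj
    have hjn : j < n := Finset.mem_range.mp hj
    by_cases hc : j ∈ C
    · rw [indicator_of_mem (show j ∈ C ∩ Iio n from ⟨hc, hjn⟩), indicator_of_mem hc]
    · rw [indicator_of_notMem (fun h => hc h.1), indicator_of_notMem hc]
  · intro j hj
    exact indicator_of_notMem (fun h => hj (Finset.mem_range.mpr h.2)) _

variable (e f)

/-- The greedy removal sequence. -/
def Aseq (x : X) : ℕ → Set ℕ
  | 0 => univ
  | n + 1 => if ‖S e f x (Aseq x n \ {n})‖ = ‖x‖ then Aseq x n \ {n} else Aseq x n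

variable {e f}

lemma Aseq_succ_subset (x : X) (n : ℕ) : Aseq e f x (n + 1) ⊆ Aseq e f x n := by
  rw [Aseq]
  split
  · exact diff_subset
  · exact subset_rfl

lemma Aseq_antitone (x : X) : Antitone (Aseq e f x) :=
  antitone_nat_of_succ_le (Aseq_succ_subset x)

lemma norm_S_Aseq (hb : IsUncondBasis e f) (x : X) (n : ℕ) :
    ‖S e f x (Aseq e f x n)‖ = ‖x‖ := by
  induction n with
  | zero => rw [Aseq, S_univ hb]
  | succ n ih =>
    rw [Aseq]
    split
    · assumption
    · exact ih

lemma mem_Aseq_of_lt (x : X) {m n : ℕ} (hmn : m < n) (hm : m ∈ Aseq e f x n) (k : ℕ) :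
    m ∈ Aseq e f x k := by
  rcases le_total k n with h | h
  · exact Aseq_antitone x h hm
  · induction k with
    | zero => exact Aseq_antitone x (Nat.zero_le n) hm
    | succ k ih =>
      rcases Nat.lt_or_ge n (k + 1) with h' | h'
      · have hk : m ∈ Aseq e f x k := by
          rcases le_total k n with h'' | h''
          · exact Aseq_antitone x h'' hm
          · exact ih h''
        have hne : m ≠ k := by omega
        rw [Aseq]
        split
        · exact ⟨hk, by simpa using hne⟩
        · exact hk
      · exact Aseq_antitone x h' hm

end MsetAux

open MsetAux

/-- In a Banach space with a normalized 1-unconditional basis, `M(x)` is nonempty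
for every `x`. -/
theorem Mset_nonempty [CompleteSpace X] (e : ℕ → X) (f : ℕ → X →L[ℝ] ℝ)
    (hb : IsUncondBasis e f) (x : X) : (Mset e f x).Nonempty := by
  classical
  set B : Set ℕ := ⋂ n, Aseq e f x n with hB
  have hBsub : ∀ n, B ⊆ Aseq e f x n := fun n => iInter_subset _ n
  -- settled initial segments
  have hsettle : ∀ n, B ∩ Set.Iio n = Aseq e f x n ∩ Set.Iio n := by
    intro n
    apply Set.eq_of_subset_of_subset
    · exact Set.inter_subset_inter_left _ (hBsub n)
    · rintro m ⟨hm, hmn⟩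
      exact ⟨Set.mem_iInter.mpr (mem_Aseq_of_lt x hmn hm), hmn⟩
  -- basisProj equals S
  have hproj : ∀ C : Set ℕ, basisProj e f C x = S e f x C := by
    intro C
    rw [basisProj, S, tsum_subtype C (fun j => f j x • e j)]
  -- tendsto of initial-segment sums to S B
  have ht1 : Tendsto (fun n => S e f x (B ∩ Set.Iio n)) atTop (𝓝 (S e f x B)) := by
    have h := (hasSum_S hb x B).tendsto_sum_nat
    have heq : (fun n => S e f x (B ∩ Set.Iio n))
        = fun n => ∑ j ∈ Finset.range n, B.indicator (fun j => f j x • e j) j := by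
      funext n; exact S_Iio hb x B n
    rwa [heq]
  -- tail tendsto zero
  have ht2 : Tendsto (fun n => S e f x (Set.Ici n)) atTop (𝓝 0) := by
    have hsplit : ∀ n : ℕ, S e f x (Set.Ici n) = x - S e f x (Set.Iio n) := by
      intro n
      have hu : Set.Iio n ∪ Set.Ici n = (Set.univ : Set ℕ) := Set.Iio_union_Ici
      have hd : Disjoint (Set.Iio n) (Set.Ici n) := by
        simp [Set.disjoint_left]
      have := S_union hb x hd
      rw [hu, S_univ hb] at this
      exact eq_sub_of_add_eq' this.symm
    have hIio : Tendsto (fun n => S e f x (Set.Iio n)) atTop (𝓝 x) := by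
      have h := (hb.expand x).tendsto_sum_nat
      have heq : (fun n => S e f x (Set.Iio n))
          = fun n => ∑ j ∈ Finset.range n, f j x • e j := by
        funext n
        have := S_Iio hb x Set.univ n
        rwa [Set.univ_inter, Set.indicator_univ] at this
      rwa [heq]
    simp only [hsplit]
    have := tendsto_const_nhds (x := x) (f := atTop (α := ℕ)) |>.sub hIio
    simpa using this
  -- ‖S x B‖ = ‖x‖
  have hnormB : ‖S e f x B‖ = ‖x‖ := by
    apply le_antisymm (norm_S_le hb x B)
    have hbound : ∀ n : ℕ, ‖x‖ ≤ ‖S e f x (B ∩ Set.Iio n)‖ + ‖S e f x (Set.Ici n)‖ := by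
      intro n
      have hdecomp : Aseq e f x n = (B ∩ Set.Iio n) ∪ (Aseq e f x n ∩ Set.Ici n) := by
        rw [hsettle n]
        rw [← Set.inter_union_distrib_left, Set.Iio_union_Ici, Set.inter_univ]
      have hd : Disjoint (B ∩ Set.Iio n) (Aseq e f x n ∩ Set.Ici n) := by
        apply Set.disjoint_left.mpr
        rintro m ⟨-, h1⟩ ⟨-, h2⟩
        exact absurd h2 (by simpa using h1)
      have := norm_S_Aseq hb x n
      rw [hdecomp, S_union hb x hd] at this
      calc ‖x‖ = ‖S e f x (B ∩ Set.Iio n) + S e f x (Aseq e f x n ∩ Set.Ici n)‖ := this.symm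
        _ ≤ ‖S e f x (B ∩ Set.Iio n)‖ + ‖S e f x (Aseq e f x n ∩ Set.Ici n)‖ := norm_add_le _ _
        _ ≤ ‖S e f x (B ∩ Set.Iio n)‖ + ‖S e f x (Set.Ici n)‖ := by
            gcongr
            exact S_mono hb x Set.inter_subset_right
    have hlim : Tendsto (fun n => ‖S e f x (B ∩ Set.Iio n)‖ + ‖S e f x (Set.Ici n)‖)
        atTop (𝓝 (‖S e f x B‖ + 0)) := (ht1.norm).add (by simpa using ht2.norm)
    have := ge_of_tendsto hlim (Filter.Eventually.of_forall hbound)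
    linarith
  refine ⟨B, ?_, ?_⟩
  · rw [hproj, hnormB]
  · intro i hi
    have hiA : ∀ n, i ∈ Aseq e f x n := Set.mem_iInter.mp hi
    -- the if at step i was false
    have hlt : ‖S e f x (Aseq e f x i \ {i})‖ < ‖x‖ := by
      rcases lt_or_eq_of_le (norm_S_le hb x (Aseq e f x i \ {i})) with h | h
      · exact h
      · exfalso
        have hi1 := hiA (i + 1)
        rw [Aseq, if_pos h] at hi1
        exact hi1.2 rfl
    have hsub : B \ {i} ⊆ Aseq e f x i \ {i} :=
      Set.diff_subset_diff_left (hBsub i)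
    have hBsplit : S e f x B - f i x • e i = S e f x (B \ {i}) := by
      have hu : (B \ {i}) ∪ {i} = B := by
        rw [Set.diff_union_self, Set.union_eq_left]
        simpa using hi
      have hd : Disjoint (B \ {i}) ({i} : Set ℕ) := Set.disjoint_sdiff_left
      have := S_union hb x hd
      rw [hu, S_singleton hb x i] at this
      rw [this]; abel
    rw [hproj, hBsplit]
    calc ‖S e f x (B \ {i})‖ ≤ ‖S e f x (Aseq e f x i \ {i})‖ := S_mono hb x hsub
      _ < ‖x‖ := hlt
end
end

section
/- Let X be a real Banach space with a normalized 1-unconditional basis (e_i)_{i∈ℕ} with biorthogonal functionals (e*_i)_{i∈ℕ}, and let x ∈ S_X. If E ⊆ ℕ satisfies E ∩ A ≠ ∅ for every A ∈ M(x), then ‖x − P_E x‖ < 1. -/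
noncomputable section

variable {X : Type*} [NormedAddCommGroup X] [NormedSpace ℝ X]

section Aux

variable [CompleteSpace X]
variable (e : ℕ → X) (f : ℕ → X →L[ℝ] ℝ)

lemma basisProj_eq_tsum_indicator (A : Set ℕ) (z : X) :
    basisProj e f A z = ∑' i, A.indicator (fun i => f i z • e i) i := by
  unfold basisProj
  exact tsum_subtype A (fun i => f i z • e i)

lemma summable_indicator' (hb : IsUncondBasis e f) (A : Set ℕ) (z : X) :
    Summable (A.indicator (fun i => f i z • e i)) :=
  ((hb.expand z).summable).indicator A

lemma norm_basisProj_le (hb : IsUncondBasis e f) (A : Set ℕ) (z : X) :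
    ‖basisProj e f A z‖ ≤ ‖z‖ := by
  classical
  set θ : ℕ → ℝ := fun i => if i ∈ A then 1 else -1 with hθ
  obtain ⟨y, hy, hny⟩ := hb.signs z θ (fun i => by by_cases h : i ∈ A <;> simp [θ, h])
  have h1 : HasSum (fun i => f i z • e i) z := hb.expand z
  have hsum : HasSum (fun i => f i z • e i + θ i • f i z • e i) (z + y) := h1.add hy
  have heq : (fun i => f i z • e i + θ i • f i z • e i)
      = A.indicator (fun i => (2:ℝ) • (f i z • e i)) := by
    funext i
    by_cases h : i ∈ A
    · simp [θ, h, Set.indicator_of_mem h, two_smul]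
    · simp [θ, h, Set.indicator_of_notMem h]
  rw [heq] at hsum
  have hP : HasSum (A.indicator (fun i => f i z • e i)) (basisProj e f A z) := by
    rw [basisProj_eq_tsum_indicator]
    exact (summable_indicator' e f hb A z).hasSum
  have h2 : HasSum (A.indicator fun i => (2:ℝ) • (f i z • e i))
      ((2:ℝ) • basisProj e f A z) := by
    have h3 := hP.const_smul (2:ℝ)
    have heq2 : (fun i => (2:ℝ) • A.indicator (fun i => f i z • e i) i)
        = A.indicator (fun i => (2:ℝ) • (f i z • e i)) := by
      funext i; by_cases h : i ∈ A <;> simp [h]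
    rwa [heq2] at h3
  have hzy : z + y = (2:ℝ) • basisProj e f A z := hsum.unique h2
  have hle : ‖(2:ℝ) • basisProj e f A z‖ ≤ ‖z‖ + ‖y‖ := by
    rw [← hzy]; exact norm_add_le _ _
  rw [norm_smul] at hle
  simp only [Real.norm_ofNat] at hle
  rw [hny] at hle
  linarith

lemma apply_basisProj (hb : IsUncondBasis e f) (A : Set ℕ) (z : X) (j : ℕ) :
    f j (basisProj e f A z) = A.indicator (fun i => f i z) j := by
  have hsum : Summable fun i : A => f i z • e i := ((hb.expand z).summable).subtype A
  have hmap : f j (basisProj e f A z) = ∑' i : A, f j ((f i : X →L[ℝ] ℝ) z • e i) :=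
    ContinuousLinearMap.map_tsum _ hsum
  have hterm : ∀ i : A, f j ((f i : X →L[ℝ] ℝ) z • e i)
      = if j = (i : ℕ) then f j z else 0 := by
    intro i
    rw [map_smul, hb.biorth j i]
    by_cases h : j = (i : ℕ) <;> simp [h]
  by_cases hj : j ∈ A
  · rw [hmap, tsum_eq_single (⟨j, hj⟩ : A), hterm ⟨j, hj⟩, if_pos rfl,
      Set.indicator_of_mem hj]
    intro b hb'
    rw [hterm b, if_neg]
    intro h
    exact hb' (Subtype.ext h.symm)
  · rw [hmap, Set.indicator_of_notMem hj]
    have hz : ∀ i : A, f j ((f i : X →L[ℝ] ℝ) z • e i) = 0 := by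
      intro i
      rw [hterm i, if_neg]
      intro h
      exact hj (h ▸ i.2)
    simp [hz]

lemma norm_basisProj_mono (hb : IsUncondBasis e f) {A B : Set ℕ} (hAB : A ⊆ B) (z : X) :
    ‖basisProj e f A z‖ ≤ ‖basisProj e f B z‖ := by
  have h : basisProj e f A z = basisProj e f A (basisProj e f B z) :=
    tsum_congr fun i => by
      rw [apply_basisProj e f hb, Set.indicator_of_mem (hAB i.2)]
  rw [h]; exact norm_basisProj_le e f hb A _

lemma basisProj_split (hb : IsUncondBasis e f) {A B : Set ℕ} (hAB : A ⊆ B) (z : X) :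
    basisProj e f B z = basisProj e f A z + basisProj e f (B \ A) z := by
  rw [basisProj_eq_tsum_indicator, basisProj_eq_tsum_indicator, basisProj_eq_tsum_indicator,
    ← Summable.tsum_add (summable_indicator' e f hb A z) (summable_indicator' e f hb _ z)]
  have h1 : A ∪ (B \ A) = B := Set.union_diff_cancel hAB
  have h2 : Disjoint A (B \ A) := disjoint_sdiff_self_right
  have h3 := Set.indicator_union_of_disjoint h2 (fun i => f i z • e i)
  rw [h1] at h3
  exact tsum_congr fun i => congrFun h3 i

lemma basisProj_univ (hb : IsUncondBasis e f) (z : X) : basisProj e f Set.univ z = z := by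
  rw [basisProj_eq_tsum_indicator, Set.indicator_univ]
  exact (hb.expand z).tsum_eq

lemma basisProj_compl (hb : IsUncondBasis e f) (A : Set ℕ) (z : X) :
    basisProj e f Aᶜ z = z - basisProj e f A z := by
  have h := basisProj_split e f hb (Set.subset_univ A) z
  rw [basisProj_univ e f hb, (Set.compl_eq_univ_diff A).symm] at h
  exact eq_sub_of_add_eq (by rw [add_comm]; exact h.symm)

lemma basisProj_singleton (i : ℕ) (z : X) :
    basisProj e f {i} z = f i z • e i :=
  tsum_singleton i (fun j => f j z • e j)

lemma tendsto_norm_basisProj_Ici (hb : IsUncondBasis e f) (z : X) :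
    Filter.Tendsto (fun n => ‖basisProj e f (Set.Ici n) z‖) Filter.atTop (nhds 0) := by
  have hIio : ∀ n : ℕ, basisProj e f (Set.Iio n) z = ∑ i ∈ Finset.range n, f i z • e i := by
    intro n
    rw [basisProj_eq_tsum_indicator, tsum_eq_sum (s := Finset.range n)]
    · refine Finset.sum_congr rfl fun i hi => ?_
      exact Set.indicator_of_mem (show i ∈ Set.Iio n from Finset.mem_range.mp hi) _
    · intro i hi
      exact Set.indicator_of_notMem (by simpa using hi) _
  have key : ∀ n : ℕ, basisProj e f (Set.Ici n) z
      = z - ∑ i ∈ Finset.range n, f i z • e i := by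
    intro n
    rw [← hIio n, ← Set.compl_Iio]
    exact basisProj_compl e f hb _ z
  have h := (hb.expand z).tendsto_sum_nat
  have h2 : Filter.Tendsto (fun n => z - ∑ i ∈ Finset.range n, f i z • e i)
      Filter.atTop (nhds (z - z)) := Filter.Tendsto.sub tendsto_const_nhds h
  rw [sub_self] at h2
  have h3 := h2.norm
  rw [norm_zero] at h3
  simpa [key] using h3

open Classical in
/-- The decreasing sequence of sets obtained by greedily removing coordinates
from `E0` while keeping the projection norm equal to `1`. -/
def Dset (e : ℕ → X) (f : ℕ → X →L[ℝ] ℝ) (x : X) (E0 : Set ℕ) : ℕ → Set ℕ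
  | 0 => E0
  | n + 1 =>
      if ‖basisProj e f (Dset e f x E0 n \ {n}) x‖ = 1 then Dset e f x E0 n \ {n}
      else Dset e f x E0 n

end Aux

/-- If `x` is in the unit sphere of a Banach space with a normalized 1-unconditional basis
and `E ⊆ ℕ` meets every member of `M(x)`, then `‖x - P_E x‖ < 1`. -/
theorem norm_sub_proj_lt_one [CompleteSpace X] (e : ℕ → X) (f : ℕ → X →L[ℝ] ℝ)
    (hb : IsUncondBasis e f) (x : X) (hx : ‖x‖ = 1) (E : Set ℕ)
    (hE : ∀ A ∈ Mset e f x, (E ∩ A).Nonempty) :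
    ‖x - basisProj e f E x‖ < 1 := by
  classical
  by_contra hcon
  push_neg at hcon
  have hcompl : x - basisProj e f E x = basisProj e f Eᶜ x :=
    (basisProj_compl e f hb E x).symm
  have hle : ‖basisProj e f Eᶜ x‖ ≤ 1 := hx ▸ norm_basisProj_le e f hb Eᶜ x
  have hEc : ‖basisProj e f Eᶜ x‖ = 1 := le_antisymm hle (by rwa [hcompl] at hcon)
  set D : ℕ → Set ℕ := Dset e f x Eᶜ with hD
  have hDsucc : ∀ n, D (n + 1)
      = if ‖basisProj e f (D n \ {n}) x‖ = 1 then D n \ {n} else D n := by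
    intro n
    rw [hD]
    rfl
  have hstep : ∀ n, D (n + 1) ⊆ D n := by
    intro n
    rw [hDsucc]
    split
    · exact Set.diff_subset
    · exact subset_rfl
  have hanti : ∀ m n, m ≤ n → D n ⊆ D m := by
    intro m n h
    induction n, h using Nat.le_induction with
    | base => exact subset_rfl
    | succ n hn ih => exact (hstep n).trans ih
  have hnorm : ∀ n, ‖basisProj e f (D n) x‖ = 1 := by
    intro n
    induction n with
    | zero => exact hEc
    | succ n ih =>
      rw [hDsucc]
      split
      · assumption
      · exact ih
  have hkeep : ∀ k n, k + 1 ≤ n → (k ∈ D n ↔ k ∈ D (k + 1)) := by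
    intro k n h
    induction n, h using Nat.le_induction with
    | base => exact Iff.rfl
    | succ n hn ih =>
      rw [hDsucc n]
      split
      · constructor
        · intro hk
          exact ih.mp hk.1
        · intro hk
          exact ⟨ih.mpr hk, by simp; omega⟩
      · exact ih
  set A : Set ℕ := ⋂ n, D n with hA
  have hAsub : ∀ n, A ⊆ D n := fun n => Set.iInter_subset D n
  have hmemA : ∀ k, k ∈ A ↔ k ∈ D (k + 1) := by
    intro k
    constructor
    · intro h
      exact hAsub (k + 1) h
    · intro h
      rw [hA, Set.mem_iInter]
      intro n
      rcases le_or_gt n (k + 1) with h' | h'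
      · exact hanti n (k + 1) h' h
      · exact (hkeep k n (by omega)).mpr h
  have hdiff : ∀ n, D n \ A ⊆ Set.Ici n := by
    intro n k hk
    by_contra hlt
    simp only [Set.mem_Ici, not_le] at hlt
    exact hk.2 ((hmemA k).mpr (hanti (k + 1) n (by omega) hk.1))
  have hAD : ∀ n, basisProj e f (D n) x = basisProj e f A x + basisProj e f (D n \ A) x :=
    fun n => basisProj_split e f hb (hAsub n) x
  have htail := tendsto_norm_basisProj_Ici e f hb x
  have hbound : ∀ n, |‖basisProj e f A x‖ - 1| ≤ ‖basisProj e f (Set.Ici n) x‖ := by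
    intro n
    calc |‖basisProj e f A x‖ - 1|
        = |‖basisProj e f A x‖ - ‖basisProj e f (D n) x‖| := by rw [hnorm n]
      _ ≤ ‖basisProj e f A x - basisProj e f (D n) x‖ := abs_norm_sub_norm_le _ _
      _ = ‖basisProj e f (D n \ A) x‖ := by
          rw [hAD n]
          simp [norm_neg]
      _ ≤ ‖basisProj e f (Set.Ici n) x‖ := norm_basisProj_mono e f hb (hdiff n) x
  have h0 : |‖basisProj e f A x‖ - 1| ≤ 0 :=
    ge_of_tendsto' htail hbound
  have hnormA : ‖basisProj e f A x‖ = 1 := by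
    have := abs_nonneg (‖basisProj e f A x‖ - 1)
    have h1 : |‖basisProj e f A x‖ - 1| = 0 := le_antisymm h0 this
    have := abs_eq_zero.mp h1
    linarith
  have hAM : A ∈ Mset e f x := by
    constructor
    · rw [hnormA, hx]
    · intro i hi
      have hiD : i ∈ D (i + 1) := (hmemA i).mp hi
      have htest : ‖basisProj e f (D i \ {i}) x‖ ≠ 1 := by
        intro h
        rw [hDsucc i, if_pos h] at hiD
        exact hiD.2 rfl
      have hlt : ‖basisProj e f (D i \ {i}) x‖ < 1 :=
        lt_of_le_of_ne (hx ▸ norm_basisProj_le e f hb _ x) htest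
      have hsub : A \ {i} ⊆ D i \ {i} := Set.diff_subset_diff_left (hAsub i)
      have heq : basisProj e f A x - f i x • e i = basisProj e f (A \ {i}) x := by
        have hs := basisProj_split e f hb (Set.singleton_subset_iff.mpr hi) x
        rw [basisProj_singleton] at hs
        rw [hs]
        abel
      rw [hx, heq]
      exact lt_of_le_of_lt (norm_basisProj_mono e f hb hsub x) hlt
  obtain ⟨j, hjE, hjA⟩ := hE A hAM
  exact (hAsub 0 hjA) hjE
end
end

section
/- Let X be a real Banach space with a normalized 1-unconditional basis (e_i)_{i∈ℕ} with biorthogonal functionals (e*_i)_{i∈ℕ}. For every x ∈ S_X there exist δ > 0 and a relatively weakly open subset W of B_X with x ∈ W such that ‖x − y‖ < 2 − δ for all y ∈ W. -/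
noncomputable section

open Topology

variable {X : Type*} [NormedAddCommGroup X] [NormedSpace ℝ X]

/-- The weak topology on a normed space: the coarsest topology making all continuous
linear functionals continuous. -/
def weakTopology (X : Type*) [NormedAddCommGroup X] [NormedSpace ℝ X] : TopologicalSpace X :=
  ⨅ g : X →L[ℝ] ℝ, TopologicalSpace.induced g inferInstance

/-- Flipping the sign of one coordinate preserves the norm. -/
lemma flip_norm (e : ℕ → X) (f : ℕ → X →L[ℝ] ℝ) (hb : IsUncondBasis e f)
    (z : X) (i₀ : ℕ) : ‖z - (2 * f i₀ z) • e i₀‖ = ‖z‖ := by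
  obtain ⟨w, hw, hn⟩ := hb.signs z (fun i => if i = i₀ then -1 else 1)
    (fun i => by by_cases h : i = i₀ <;> simp [h])
  have hs : HasSum (fun i => if i = i₀ then (2 * f i₀ z) • e i₀ else 0)
      ((2 * f i₀ z) • e i₀) := hasSum_ite_eq i₀ _
  have h2 : HasSum (fun i => (if i = i₀ then (-1 : ℝ) else 1) • f i z • e i)
      (z - (2 * f i₀ z) • e i₀) := by
    have hfun : (fun i => (if i = i₀ then (-1 : ℝ) else 1) • f i z • e i)
        = fun i => f i z • e i - (if i = i₀ then (2 * f i₀ z) • e i₀ else 0) := by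
      funext i
      by_cases h : i = i₀
      · subst h; rw [if_pos rfl, if_pos rfl]; module
      · simp [h]
    rw [hfun]
    exact (hb.expand z).sub hs
  rw [← hn, hw.unique h2]

/-- Removing one coordinate does not increase the norm. -/
lemma drop_coord (e : ℕ → X) (f : ℕ → X →L[ℝ] ℝ) (hb : IsUncondBasis e f)
    (z : X) (i₀ : ℕ) : ‖z - f i₀ z • e i₀‖ ≤ ‖z‖ := by
  have h : z - f i₀ z • e i₀ = (2⁻¹ : ℝ) • (z + (z - (2 * f i₀ z) • e i₀)) := by module
  rw [h]
  calc ‖(2⁻¹ : ℝ) • (z + (z - (2 * f i₀ z) • e i₀))‖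
      = 2⁻¹ * ‖z + (z - (2 * f i₀ z) • e i₀)‖ := by
        rw [norm_smul]; norm_num
    _ ≤ 2⁻¹ * (‖z‖ + ‖z - (2 * f i₀ z) • e i₀‖) := by
        gcongr; exact norm_add_le _ _
    _ = ‖z‖ := by rw [flip_norm e f hb z i₀]; ring

/-- The tail projections have norm at most one. -/
lemma tail_norm_le (e : ℕ → X) (f : ℕ → X →L[ℝ] ℝ) (hb : IsUncondBasis e f)
    (y : X) : ∀ n : ℕ, ‖y - ∑ i ∈ Finset.range n, f i y • e i‖ ≤ ‖y‖ := by
  intro n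
  induction n with
  | zero => simp
  | succ n ih =>
    set R := y - ∑ i ∈ Finset.range n, f i y • e i with hR
    have hzero : f n (∑ i ∈ Finset.range n, f i y • e i) = 0 := by
      rw [map_sum]
      refine Finset.sum_eq_zero fun i hi => ?_
      have hne : n ≠ i := (Finset.mem_range.mp hi).ne'
      rw [map_smul, hb.biorth n i, if_neg hne]
      simp
    have hfR : f n R = f n y := by
      simp [hR, map_sub, hzero]
    have key : y - ∑ i ∈ Finset.range (n + 1), f i y • e i = R - f n R • e n := by
      rw [Finset.sum_range_succ, hfR, hR]; abel
    rw [key]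
    exact le_trans (drop_coord e f hb R n) ih

/-- For every point `x` of the unit sphere of a Banach space with a normalized
1-unconditional basis there are `δ > 0` and a relatively weakly open subset
`W = U ∩ B_X` of the unit ball containing `x` such that `‖x - y‖ < 2 - δ` for every
`y ∈ W`. -/
theorem exists_weak_nbhd_diameter_lt_two [CompleteSpace X] (e : ℕ → X) (f : ℕ → X →L[ℝ] ℝ)
    (hb : IsUncondBasis e f) (x : X) (hx : ‖x‖ = 1) :
    ∃ δ : ℝ, 0 < δ ∧ ∃ U : Set X, IsOpen[weakTopology X] U ∧ x ∈ U ∧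
      ∀ y ∈ U, ‖y‖ ≤ 1 → ‖x - y‖ < 2 - δ := by
  -- Find `n` with the tail of `x` smaller than `1/4`.
  have hev : ∀ᶠ s in Filter.atTop, (∑ i ∈ s, f i x • e i) ∈ Metric.ball x (1/4) :=
    (hb.expand x).eventually (Metric.ball_mem_nhds x (by norm_num))
  obtain ⟨s₀, hs₀⟩ := Filter.eventually_atTop.mp hev
  set n : ℕ := s₀.sup id + 1 with hn
  have hsub : s₀ ≤ Finset.range n := by
    intro i hi
    exact Finset.mem_range.mpr (Nat.lt_succ_of_le (Finset.le_sup (f := id) hi))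
  have hPx : ‖x - ∑ i ∈ Finset.range n, f i x • e i‖ < 1/4 := by
    have := hs₀ (Finset.range n) hsub
    rw [Metric.mem_ball, dist_eq_norm] at this
    rwa [← norm_neg, neg_sub]
  set c : ℝ := 1 / (4 * (n + 1)) with hc
  have hcpos : 0 < c := by positivity
  set U : Set X := {y : X | ∀ i ∈ Finset.range n, |f i y - f i x| < c} with hU
  refine ⟨1/2, by norm_num, U, ?_, ?_, ?_⟩
  · -- weak openness
    have hUeq : U = ⋂ i ∈ Finset.range n, f i ⁻¹' Metric.ball (f i x) c := by
      ext y
      simp [hU, Real.dist_eq]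
    rw [hUeq]
    refine @isOpen_biInter_finset X ℕ (weakTopology X) _ _ fun i _ => ?_
    have hle : weakTopology X ≤ TopologicalSpace.induced (f i) inferInstance :=
      iInf_le _ (f i)
    exact (isOpen_implies_isOpen_iff.mpr hle) _ (isOpen_induced Metric.isOpen_ball)
  · intro i _
    simpa using hcpos
  · intro y hy hynorm
    have hPy : ‖y - ∑ i ∈ Finset.range n, f i y • e i‖ ≤ 1 :=
      le_trans (tail_norm_le e f hb y n) hynorm
    have hmid : ‖(∑ i ∈ Finset.range n, f i x • e i) - ∑ i ∈ Finset.range n, f i y • e i‖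
        ≤ 1/4 := by
      rw [← Finset.sum_sub_distrib]
      calc ‖∑ i ∈ Finset.range n, (f i x • e i - f i y • e i)‖
          ≤ ∑ i ∈ Finset.range n, ‖f i x • e i - f i y • e i‖ := norm_sum_le _ _
        _ ≤ ∑ _i ∈ Finset.range n, c := by
            refine Finset.sum_le_sum fun i hi => ?_
            rw [← sub_smul, norm_smul, hb.norm_e i, mul_one]
            have := hy i hi
            rw [Real.norm_eq_abs, abs_sub_comm]
            exact le_of_lt this
        _ = n * c := by rw [Finset.sum_const, Finset.card_range]; simp
        _ ≤ 1/4 := by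
            rw [hc, mul_one_div, div_le_div_iff₀ (by positivity) (by norm_num)]
            have hn0 : (0:ℝ) ≤ (n : ℝ) := Nat.cast_nonneg n
            nlinarith
    have hdecomp : x - y = (x - ∑ i ∈ Finset.range n, f i x • e i)
        + ((∑ i ∈ Finset.range n, f i x • e i) - ∑ i ∈ Finset.range n, f i y • e i)
        + -(y - ∑ i ∈ Finset.range n, f i y • e i) := by abel
    calc ‖x - y‖ ≤ ‖x - ∑ i ∈ Finset.range n, f i x • e i‖
          + ‖(∑ i ∈ Finset.range n, f i x • e i) - ∑ i ∈ Finset.range n, f i y • e i‖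
          + ‖y - ∑ i ∈ Finset.range n, f i y • e i‖ := by
            rw [hdecomp]
            refine le_trans (norm_add_le _ _) ?_
            rw [norm_neg]
            gcongr
            exact norm_add_le _ _
      _ < 2 - 1/2 := by linarith
end
end

section
/- Let X be a real Banach space with a normalized 1-symmetric basis (e_i)_{i∈ℕ} with biorthogonal functionals (e*_i)_{i∈ℕ}, and let x ∈ S_X. Then: (1) if M(x) contains an infinite set, then M(x) = {supp(x)}, where supp(x) = {i ∈ ℕ : e*_i(x) ≠ 0}; (2) if every member of M(x) is finite, then any A, B ∈ M(x) satisfy |A| = |B| and the function i ↦ |e*_i(x)| is constant on the symmetric difference A △ B. -/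
noncomputable section

variable {X : Type*} [NormedAddCommGroup X] [NormedSpace ℝ X]

/-- `(e, f)` is a normalized 1-symmetric basis: a 1-unconditional basis such that moreover
permuting the coefficients of any `x` by any permutation of `ℕ` (with any choice of signs)
gives a summable family whose sum has the same norm as `x`. -/
structure IsSymmetricBasis (e : ℕ → X) (f : ℕ → X →L[ℝ] ℝ)
    extends IsUncondBasis e f : Prop where
  symm : ∀ (x : X) (θ : ℕ → ℝ) (π : Equiv.Perm ℕ), (∀ i, θ i = 1 ∨ θ i = -1) →
    ∃ y : X, HasSum (fun i => θ i • f i x • e (π i)) y ∧ ‖y‖ = ‖x‖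

/-!
An element of `M(x)` is "greedy": by symmetry, a coefficient of `x` outside `A ∈ M(x)` can be
moved into the position of a coefficient inside `A` without changing norms, and if it were
larger in absolute value, convexity of the norm along the segment from `P_{A \ {i}} x` would
make `‖P_A x‖ < ‖x‖`. Hence coefficients inside `A` dominate those outside. For infinite `A`
this forces `A = supp x`, since coefficients tend to zero. For finite `A, B ∈ M(x)` all
coefficients on `A ∆ B` have the same modulus, so coefficients of `A \ B` can be exchanged
one at a time for those of `B \ A` without changing `‖P_A x‖ = ‖x‖`; minimality of `B` then
forbids `B \ A` from being larger than `A \ B`.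
-/

open Set Filter Topology

theorem norm_add_smul_lt_of_norm_lt {v w : X} {r t : ℝ} (hv : ‖v‖ < r) (hw : ‖v + w‖ ≤ r)
    (ht₀ : 0 ≤ t) (ht₁ : t < 1) : ‖v + t • w‖ < r :=
  calc ‖v + t • w‖ = ‖t • (v + w) + (1 - t) • v‖ := by congr 1; module
    _ ≤ t * ‖v + w‖ + (1 - t) * ‖v‖ := by
      refine (norm_add_le _ _).trans_eq ?_
      rw [norm_smul, norm_smul, Real.norm_of_nonneg ht₀, Real.norm_of_nonneg (by linarith)]
    _ < t * r + (1 - t) * r := by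
      nlinarith [mul_le_mul_of_nonneg_left hw ht₀, mul_lt_mul_of_pos_left hv (sub_pos.2 ht₁)]
    _ = r := by ring

theorem subset_support_of_mem_Mset {e : ℕ → X} {f : ℕ → X →L[ℝ] ℝ} {x : X} {A : Set ℕ}
    (hA : A ∈ Mset e f x) : A ⊆ {i | f i x ≠ 0} := by
  intro i hi hfi
  have := hA.2 i hi
  rw [hfi, zero_smul, sub_zero, hA.1] at this
  exact lt_irrefl _ this

namespace IsUncondBasis

variable {e : ℕ → X} {f : ℕ → X →L[ℝ] ℝ} (hu : IsUncondBasis e f)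
include hu

/-- Averaging `x` with its sign change off `A` shows that the family defining `P_A x` is
summable even when `X` is not complete. -/
theorem exists_hasSum_indicator_norm_le (A : Set ℕ) (x : X) :
    ∃ p, HasSum (A.indicator fun i => f i x • e i) p ∧ ‖p‖ ≤ ‖x‖ := by
  classical
  let θ : ℕ → ℝ := fun i => if i ∈ A then 1 else -1
  obtain ⟨y, hy, hny⟩ := hu.signs x θ fun i => by by_cases h : i ∈ A <;> simp [θ, h]
  refine ⟨(2 : ℝ)⁻¹ • (x + y), ?_, ?_⟩
  · convert ((hu.expand x).add hy).const_smul (2 : ℝ)⁻¹ using 1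
    funext i
    by_cases h : i ∈ A
    · simp only [θ, if_pos h, indicator_of_mem h, one_smul]; module
    · simp [θ, if_neg h, indicator_of_notMem h]
  · rw [norm_smul]
    calc ‖(2 : ℝ)⁻¹‖ * ‖x + y‖ ≤ 2⁻¹ * (‖x‖ + ‖y‖) := by
          rw [Real.norm_of_nonneg (by norm_num)]; gcongr; exact norm_add_le x y
      _ = ‖x‖ := by rw [hny]; ring

theorem hasSum_basisProj (A : Set ℕ) (x : X) :
    HasSum (A.indicator fun i => f i x • e i) (basisProj e f A x) := by
  obtain ⟨p, hp, -⟩ := hu.exists_hasSum_indicator_norm_le A x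
  rw [basisProj, tsum_subtype A (fun i => f i x • e i)]
  exact hp.summable.hasSum

theorem coef_basisProj (A : Set ℕ) (x : X) (j : ℕ) :
    f j (basisProj e f A x) = A.indicator (fun i => f i x) j := by
  have hcoef : ∀ i, f j (A.indicator (fun i => f i x • e i) i) =
      if i = j then A.indicator (fun i => f i x) j else 0 := by
    intro i
    by_cases hi : i ∈ A <;> by_cases hij : i = j <;>
      simp_all [hu.biorth, eq_comm (a := j)]
  have h := (f j).hasSum (hu.hasSum_basisProj A x)
  simp only [hcoef] at h
  exact h.unique (hasSum_ite_eq j _)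

theorem tendsto_coef_cofinite (x : X) : Tendsto (fun i => f i x) cofinite (𝓝 0) := by
  have := (hu.expand x).summable.tendsto_cofinite_zero.norm
  exact tendsto_zero_iff_norm_tendsto_zero.2 (by simpa [norm_smul, hu.norm_e] using this)

theorem norm_basisProj_le (A : Set ℕ) (x : X) : ‖basisProj e f A x‖ ≤ ‖x‖ := by
  obtain ⟨p, hp, hpx⟩ := hu.exists_hasSum_indicator_norm_le A x
  rwa [(hu.hasSum_basisProj A x).unique hp]

theorem basisProj_basisProj {A B : Set ℕ} (hAB : A ⊆ B) (x : X) :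
    basisProj e f A (basisProj e f B x) = basisProj e f A x :=
  tsum_congr fun i => by rw [hu.coef_basisProj, indicator_of_mem (hAB i.2)]

theorem norm_basisProj_mono {A B : Set ℕ} (hAB : A ⊆ B) (x : X) :
    ‖basisProj e f A x‖ ≤ ‖basisProj e f B x‖ :=
  hu.basisProj_basisProj hAB x ▸ hu.norm_basisProj_le A _

theorem basisProj_insert {A : Set ℕ} {j : ℕ} (hj : j ∉ A) (x : X) :
    basisProj e f (insert j A) x = basisProj e f A x + f j x • e j := by
  classical
  have h := (hu.hasSum_basisProj A x).add (hasSum_pi_single j (f j x • e j))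
  rw [← indicator_singleton j (fun i => f i x • e i),
    ← indicator_union_of_disjoint (disjoint_singleton_right.2 hj), union_singleton] at h
  exact (hu.hasSum_basisProj _ x).unique h

theorem basisProj_eq_sdiff_singleton_add {A : Set ℕ} {j : ℕ} (hj : j ∈ A) (x : X) :
    basisProj e f A x = basisProj e f (A \ {j}) x + f j x • e j := by
  rw [← hu.basisProj_insert (fun h => h.2 rfl), insert_sdiff_self_of_mem hj]

theorem norm_basisProj_sdiff_singleton_lt {A : Set ℕ} {x : X} (hA : A ∈ Mset e f x)
    {j : ℕ} (hj : j ∈ A) : ‖basisProj e f (A \ {j}) x‖ < ‖x‖ := by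
  simpa [hu.basisProj_eq_sdiff_singleton_add hj] using hA.2 j hj

theorem eq_of_subset_of_mem_Mset {A C : Set ℕ} {x : X} (hA : A ∈ Mset e f x) (hCA : C ⊆ A)
    (hC : ‖basisProj e f C x‖ = ‖x‖) : C = A := by
  refine hCA.antisymm fun j hjA => by_contra fun hjC => ?_
  have hsub : C ⊆ A \ {j} := fun k hk => ⟨hCA hk, fun h => hjC (h ▸ hk)⟩
  have := hu.norm_basisProj_mono hsub x
  linarith [hu.norm_basisProj_sdiff_singleton_lt hA hjA]

end IsUncondBasis

theorem exists_sign_mul_eq_of_abs_eq {s t : ℝ} (h : |s| = |t|) :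
    ∃ θ : ℝ, (θ = 1 ∨ θ = -1) ∧ θ * s = t := by
  rcases abs_eq_abs.1 h with h | h
  · exact ⟨1, Or.inl rfl, by rw [one_mul, h]⟩
  · exact ⟨-1, Or.inr rfl, by rw [h]; ring⟩

namespace IsSymmetricBasis

variable {e : ℕ → X} {f : ℕ → X →L[ℝ] ℝ} (hb : IsSymmetricBasis e f)
include hb

theorem norm_basisProj_add_smul_eq {D : Set ℕ} {i j : ℕ} (hi : i ∉ D) (hj : j ∉ D) (x : X)
    {s t : ℝ} (hst : |s| = |t|) :
    ‖basisProj e f D x + s • e i‖ = ‖basisProj e f D x + t • e j‖ := by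
  classical
  obtain ⟨ε, hε, hεs⟩ := exists_sign_mul_eq_of_abs_eq hst
  let θ : ℕ → ℝ := fun k => if k = i then ε else 1
  obtain ⟨y, hy, hny⟩ := hb.symm (basisProj e f D x + s • e i) θ (Equiv.swap i j)
    fun k => by by_cases h : k = i <;> simp [θ, h, hε]
  have hswap : HasSum (fun k => θ k • f k (basisProj e f D x + s • e i) • e (Equiv.swap i j k))
      (basisProj e f D x + t • e j) := by
    convert (hb.hasSum_basisProj D x).add (hasSum_ite_eq i (t • e j)) using 1
    funext k
    simp only [map_add, map_smul, hb.coef_basisProj, hb.biorth, smul_eq_mul]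
    by_cases hki : k = i
    · subst hki
      simp [θ, indicator_of_notMem hi, ← hεs, mul_smul]
    · have hkj : k ∈ D → k ≠ j := fun hk h => hj (h ▸ hk)
      by_cases hk : k ∈ D
      · simp [θ, hki, hk, Equiv.swap_apply_of_ne_of_ne hki (hkj hk)]
      · simp [θ, hki, hk]
  rw [← hy.unique hswap, hny]

theorem norm_basisProj_exchange {C : Set ℕ} {i j : ℕ} {x : X} (hi : i ∈ C) (hj : j ∉ C)
    (hij : |f i x| = |f j x|) :
    ‖basisProj e f (insert j (C \ {i})) x‖ = ‖basisProj e f C x‖ := by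
  have hjC : j ∉ C \ {i} := fun h => hj h.1
  rw [hb.basisProj_insert hjC, hb.basisProj_eq_sdiff_singleton_add hi,
    hb.norm_basisProj_add_smul_eq (fun h => h.2 rfl) hjC x hij]

theorem abs_coef_le_of_mem_Mset {A : Set ℕ} {x : X} (hA : A ∈ Mset e f x) {i j : ℕ}
    (hi : i ∈ A) (hj : j ∉ A) : |f j x| ≤ |f i x| := by
  by_contra! hlt
  set v := basisProj e f (A \ {i}) x
  set T := |f j x|
  have hT : 0 < T := (abs_nonneg _).trans_lt hlt
  set s : ℝ := if 0 ≤ f i x then T else -T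
  have hs : f i x = (|f i x| / T) * s := by
    unfold s; split_ifs with h
    · rw [abs_of_nonneg h, div_mul_cancel₀ _ hT.ne']
    · rw [abs_of_neg (not_le.1 h)]; field_simp
  have hjD : j ∉ A \ {i} := fun h => hj h.1
  have hvs : ‖v + s • e i‖ ≤ ‖x‖ := by
    rw [hb.norm_basisProj_add_smul_eq (fun h => h.2 rfl) hjD x (t := f j x)
      (by unfold s; split_ifs <;> simp [T]), ← hb.basisProj_insert hjD]
    exact hb.norm_basisProj_le _ x
  have hlt' := norm_add_smul_lt_of_norm_lt (hb.norm_basisProj_sdiff_singleton_lt hA hi) hvs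
    (div_nonneg (abs_nonneg _) hT.le) ((div_lt_one hT).2 hlt)
  rw [smul_smul, ← hs, ← hb.basisProj_eq_sdiff_singleton_add hi, hA.1] at hlt'
  exact lt_irrefl _ hlt'

theorem abs_coef_eq_of_mem_Mset {A B : Set ℕ} {x : X} (hA : A ∈ Mset e f x)
    (hB : B ∈ Mset e f x) {i j : ℕ} (hi : i ∈ A \ B) (hj : j ∈ B \ A) : |f i x| = |f j x| :=
  (hb.abs_coef_le_of_mem_Mset hB hj.1 hi.2).antisymm (hb.abs_coef_le_of_mem_Mset hA hi.1 hj.2)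

theorem encard_sdiff_le_of_mem_Mset {B C : Set ℕ} {x : X} (hB : B ∈ Mset e f x)
    (hC : ‖basisProj e f C x‖ = ‖x‖) (hCB : (C \ B).Finite)
    (hcoef : ∀ i ∈ C \ B, ∀ j ∈ B \ C, |f i x| = |f j x|) :
    (B \ C).encard ≤ (C \ B).encard := by
  obtain ⟨n, hn⟩ := hCB.exists_encard_eq_coe
  induction n generalizing C with
  | zero =>
    rw [hn, hb.eq_of_subset_of_mem_Mset hB (sdiff_eq_empty.1 (encard_eq_zero.1 hn)) hC]
    simp
  | succ n ih =>
    obtain ⟨i, hi⟩ := nonempty_of_encard_ne_zero (s := C \ B) (by simp [hn])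
    rcases (B \ C).eq_empty_or_nonempty with hBC | ⟨j, hj⟩
    · simp [hBC]
    set C' := insert j (C \ {i})
    have hC'B : C' \ B = (C \ B) \ {i} := by
      ext; simp only [C', Set.mem_sdiff, mem_insert_iff, mem_singleton_iff]
      grind
    have hBC' : B \ C' = (B \ C) \ {j} := by
      ext; simp only [C', Set.mem_sdiff, mem_insert_iff, mem_singleton_iff]
      grind
    have hn' : (C' \ B).encard = n := by
      refine ENat.add_left_injective_of_ne_top ENat.one_ne_top ?_
      simp only [hC'B, encard_sdiff_singleton_add_one hi, hn, Nat.cast_succ]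
    have hih := ih ((hb.norm_basisProj_exchange hi.1 hj.2 (hcoef i hi j hj)).trans hC)
      (hC'B ▸ hCB.sdiff) (fun k hk l hl => by
        rw [hC'B] at hk; rw [hBC'] at hl; exact hcoef k hk.1 l hl.1) hn'
    rw [hBC', hC'B] at hih
    rw [← encard_sdiff_singleton_add_one hi, ← encard_sdiff_singleton_add_one hj]
    gcongr

theorem Mset_eq_singleton_support {A : Set ℕ} {x : X} (hA : A ∈ Mset e f x)
    (hinf : A.Infinite) : Mset e f x = {{i | f i x ≠ 0}} := by
  have hsupp : A = {i | f i x ≠ 0} := by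
    refine (subset_support_of_mem_Mset hA).antisymm fun j (hj : f j x ≠ 0) =>
      by_contra fun hjA => ?_
    have hlarge : {i | |f j x| ≤ |f i x|}.Finite := by
      have := (hb.tendsto_coef_cofinite x).abs.eventually
        (gt_mem_nhds (by rwa [abs_zero, abs_pos]))
      simpa [not_lt] using this
    obtain ⟨i, hiA, hi⟩ := (hinf.sdiff hlarge).nonempty
    exact hi (hb.abs_coef_le_of_mem_Mset hA hiA hjA)
  subst hsupp
  ext B
  exact ⟨fun hB => hb.eq_of_subset_of_mem_Mset hA (subset_support_of_mem_Mset hB) hB.1,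
    fun hB => hB ▸ hA⟩

theorem encard_sdiff_eq_of_mem_Mset {A B : Set ℕ} {x : X} (hA : A ∈ Mset e f x)
    (hB : B ∈ Mset e f x) (hAfin : A.Finite) (hBfin : B.Finite) :
    (A \ B).encard = (B \ A).encard :=
  (hb.encard_sdiff_le_of_mem_Mset hA hB.1 hBfin.sdiff fun _ hi _ hj =>
    hb.abs_coef_eq_of_mem_Mset hB hA hi hj).antisymm
  (hb.encard_sdiff_le_of_mem_Mset hB hA.1 hAfin.sdiff fun _ hi _ hj =>
    hb.abs_coef_eq_of_mem_Mset hA hB hi hj)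

theorem abs_coef_eq_of_mem_symmDiff {A B : Set ℕ} {x : X} (hA : A ∈ Mset e f x)
    (hB : B ∈ Mset e f x) (hcard : (A \ B).encard = (B \ A).encard) {i j : ℕ}
    (hi : i ∈ symmDiff A B) (hj : j ∈ symmDiff A B) : |f i x| = |f j x| := by
  have hne : (A \ B).Nonempty ∧ (B \ A).Nonempty := by
    have h : (A \ B).Nonempty ∨ (B \ A).Nonempty := hi.imp (⟨i, ·⟩) (⟨i, ·⟩)
    simp only [← encard_ne_zero, hcard, or_self] at h ⊢
    exact ⟨h, h⟩
  obtain ⟨⟨k, hk⟩, ⟨l, hl⟩⟩ := hne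
  have hconst : ∀ m ∈ symmDiff A B, |f m x| = |f k x| := by
    rintro m (hm | hm)
    · rw [hb.abs_coef_eq_of_mem_Mset hA hB hm hl, hb.abs_coef_eq_of_mem_Mset hA hB hk hl]
    · exact (hb.abs_coef_eq_of_mem_Mset hA hB hk hm).symm
  rw [hconst i hi, hconst j hj]

end IsSymmetricBasis

theorem Mset_of_symmetric_basis_general (e : ℕ → X) (f : ℕ → X →L[ℝ] ℝ)
    (hb : IsSymmetricBasis e f) (x : X) :
    ((∃ A ∈ Mset e f x, A.Infinite) → Mset e f x = {{i : ℕ | f i x ≠ 0}}) ∧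
    ((∀ A ∈ Mset e f x, A.Finite) → ∀ A ∈ Mset e f x, ∀ B ∈ Mset e f x,
      A.ncard = B.ncard ∧ ∀ i ∈ symmDiff A B, ∀ j ∈ symmDiff A B, |f i x| = |f j x|) := by
  refine ⟨fun ⟨A, hA, hinf⟩ => hb.Mset_eq_singleton_support hA hinf, fun hfin A hA B hB => ?_⟩
  have hcard := hb.encard_sdiff_eq_of_mem_Mset hA hB (hfin A hA) (hfin B hB)
  refine ⟨?_, fun i hi j hj => hb.abs_coef_eq_of_mem_symmDiff hA hB hcard hi hj⟩
  rw [ncard_def, ncard_def, ← encard_sdiff_add_encard_inter A B,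
    ← encard_sdiff_add_encard_inter B A, hcard, inter_comm]

/-- Let `x` be in the unit sphere of a Banach space with a normalized 1-symmetric basis.
(1) If `M(x)` contains an infinite set then `M(x) = {supp x}`;
(2) if every member of `M(x)` is finite, then any `A, B ∈ M(x)` have the same cardinality
and `i ↦ |f i x|` is constant on the symmetric difference `A ∆ B`. -/
theorem Mset_of_symmetric_basis [CompleteSpace X] (e : ℕ → X) (f : ℕ → X →L[ℝ] ℝ)
    (hb : IsSymmetricBasis e f) (x : X) (hx : ‖x‖ = 1) :
    ((∃ A ∈ Mset e f x, A.Infinite) → Mset e f x = {{i : ℕ | f i x ≠ 0}}) ∧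
    ((∀ A ∈ Mset e f x, A.Finite) → ∀ A ∈ Mset e f x, ∀ B ∈ Mset e f x,
      A.ncard = B.ncard ∧ ∀ i ∈ symmDiff A B, ∀ j ∈ symmDiff A B, |f i x| = |f j x|) :=
  Mset_of_symmetric_basis_general e f hb x
end
end

section
/- Let X be a real Banach space and let (x_t)_{t∈𝔅} ⊆ B_X be a dyadic tree, i.e. x_t = (1/2)(x_{t⌢0} + x_{t⌢1}) for every t ∈ 𝔅. If limsup_{n→∞} (min_{|t|=n} ‖x_∅ − x_t‖) = 2, then ‖x_∅‖ = 1 and x_∅ is a delta-point. -/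
noncomputable section

private lemma hull_aux {X : Type*} [NormedAddCommGroup X] [NormedSpace ℝ X]
    (x : List Bool → X)
    (hdyadic : ∀ t : List Bool, x t = (1 / 2 : ℝ) • (x (t ++ [false]) + x (t ++ [true]))) :
    ∀ n (t : List Bool),
      x t ∈ convexHull ℝ {y | ∃ s : List Bool, s.length = n ∧ y = x (t ++ s)} := by
  intro n
  induction n with
  | zero =>
    intro t
    exact subset_convexHull ℝ _ ⟨[], rfl, by simp⟩
  | succ n ih =>
    intro t
    have sub : ∀ b : Bool, {y | ∃ s : List Bool, s.length = n ∧ y = x (t ++ [b] ++ s)} ⊆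
        {y | ∃ s : List Bool, s.length = n + 1 ∧ y = x (t ++ s)} := by
      rintro b y ⟨s, hs, rfl⟩
      exact ⟨b :: s, by simp [hs], by simp [List.append_assoc]⟩
    have h0' := convexHull_mono (sub false) (ih (t ++ [false]))
    have h1' := convexHull_mono (sub true) (ih (t ++ [true]))
    have hmid := (convex_convexHull ℝ _) h0' h1' (by norm_num) (by norm_num)
      (by norm_num : (1/2 : ℝ) + 1/2 = 1)
    rw [hdyadic t, smul_add]
    exact hmid

/-- Let `(x_t)_{t ∈ 𝔅}` be a dyadic tree in the unit ball of a Banach space, indexed by the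
infinite binary tree `𝔅` of finite 0-1 sequences (here modeled by `List Bool`, with root the
empty list and the two immediate successors of `t` obtained by appending a letter).
If `limsup_n (min_{|t| = n} ‖x_∅ - x_t‖) = 2`, then `x_∅` lies on the unit sphere and is a
delta-point. -/
theorem deltaPoint_of_dyadic_tree {X : Type*} [NormedAddCommGroup X] [NormedSpace ℝ X]
    [CompleteSpace X] (x : List Bool → X)
    (hball : ∀ t, ‖x t‖ ≤ 1)
    (hdyadic : ∀ t : List Bool, x t = (1 / 2 : ℝ) • (x (t ++ [false]) + x (t ++ [true])))
    (hlimsup : Filter.limsup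
      (fun n : ℕ => ⨅ t : {t : List Bool // t.length = n}, ‖x [] - x t.1‖)
      Filter.atTop = 2) :
    ‖x []‖ = 1 ∧ IsDeltaPoint (x []) := by
  set f : ℕ → ℝ := fun n => ⨅ t : {t : List Bool // t.length = n}, ‖x [] - x t.1‖ with hf
  have hne : ∀ n, Nonempty {t : List Bool // t.length = n} :=
    fun n => ⟨⟨List.replicate n false, by simp⟩⟩
  have hbdd : ∀ n, BddBelow (Set.range fun t : {t : List Bool // t.length = n} => ‖x [] - x t.1‖) :=
    fun n => ⟨0, by rintro y ⟨t, rfl⟩; exact norm_nonneg _⟩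
  have hfreq : ∀ ε : ℝ, 0 < ε → ∃ᶠ n in Filter.atTop, 2 - ε < f n := by
    intro ε hε
    have hcobdd : Filter.IsCoboundedUnder (· ≤ ·) Filter.atTop f :=
      Filter.IsBoundedUnder.isCoboundedUnder_le
        (Filter.isBoundedUnder_of ⟨0, fun n => le_ciInf fun t => norm_nonneg _⟩)
    exact Filter.frequently_lt_of_lt_limsup hcobdd (by rw [hlimsup]; linarith)
  have hnorm : ‖x []‖ = 1 := by
    refine le_antisymm (hball []) ?_
    by_contra h
    push_neg at h
    obtain ⟨n, hn⟩ := (hfreq (1 - ‖x []‖) (by linarith)).exists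
    have hle : f n ≤ ‖x [] - x (List.replicate n false)‖ :=
      ciInf_le (hbdd n) ⟨List.replicate n false, by simp⟩
    have hub : ‖x [] - x (List.replicate n false)‖ ≤ ‖x []‖ + 1 :=
      (norm_sub_le _ _).trans (by linarith [hball (List.replicate n false)])
    linarith
  refine ⟨hnorm, fun ε hε => ?_⟩
  obtain ⟨n, hn⟩ := (hfreq ε hε).exists
  apply subset_closure
  have hsub : {y | ∃ s : List Bool, s.length = n ∧ y = x ([] ++ s)} ⊆ deltaSet (x []) ε := by
    rintro y ⟨s, hs, rfl⟩
    refine ⟨hball _, ?_⟩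
    have hle : f n ≤ ‖x [] - x ([] ++ s)‖ :=
      ciInf_le (hbdd n) (⟨[] ++ s, by simpa using hs⟩ : {t : List Bool // t.length = n})
    linarith
  exact convexHull_mono hsub (hull_aux x hdyadic n [])
end
end
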